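/- arXiv:2208.14939 — 5 statements merged into one kernel-verified Lean document; each statement's English description precedes it below -/
import Mathlib

section
/- With T independent uniformly random subsets of sizes m₁,…,m_T from an n-element set (n ≥ 2, mᵢ ≥ 1), the variance of x_T = |⋂ M_i| equals (∏ mᵢ / n^{T-1}) · (1 + ∏(mᵢ−1)/(n−1)^{T-1} − ∏ mᵢ / n^{T-1}). -/
/-!
The sample space is the finset `sizedTuples α m` of tuples `(Mᵢ)` with `#Mᵢ = mᵢ`, with the
counting measure. Double counting gives `∑ |⋂ Mᵢ| = ∑ₐ #{(Mᵢ) | a ∈ ⋂ Mᵢ}` and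
`∑ |⋂ Mᵢ|² = ∑_{a,b} #{(Mᵢ) | {a, b} ⊆ ⋂ Mᵢ}`. The tuples whose members all contain a fixed
`j`-set form the fraction `∏ᵢ C(mᵢ, j) / C(n, j)` of the sample space, so
`E x = n ∏ mᵢ/n` and `E x² = n ∏ mᵢ/n + n(n-1) ∏ mᵢ(mᵢ-1)/(n(n-1))`, the two terms of the
second sum coming from the diagonal `a = b` and from the `n(n-1)` pairs `a ≠ b`.
-/

open Finset

variable {α ι : Type*} [Fintype α] [Fintype ι] [DecidableEq ι]

variable (α) in
def sizedTuples (m : ι → ℕ) : Finset (ι → Finset α) :=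
  Fintype.piFinset fun i => powersetCard (m i) univ

lemma mem_sizedTuples {m : ι → ℕ} {f : ι → Finset α} :
    f ∈ sizedTuples α m ↔ ∀ i, #(f i) = m i := by
  simp [sizedTuples, Fintype.mem_piFinset, mem_powersetCard]

lemma card_sizedTuples (m : ι → ℕ) :
    #(sizedTuples α m) = ∏ i, (Fintype.card α).choose (m i) := by
  simp only [sizedTuples, Fintype.card_piFinset, card_powersetCard, card_univ]

lemma filter_piFinset_forall {β : ι → Type*} (t : ∀ i, Finset (β i)) (p : ∀ i, β i → Prop)
    [∀ i, DecidablePred (p i)] :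
    {f ∈ Fintype.piFinset t | ∀ i, p i (f i)} = Fintype.piFinset fun i => {x ∈ t i | p i x} := by
  ext f
  simp only [mem_filter, Fintype.mem_piFinset, forall_and]

lemma sum_card_eq_sum_card_filter_mem {β γ : Type*} [Fintype γ] [DecidableEq γ]
    (A : Finset β) (g : β → Finset γ) :
    ∑ x ∈ A, #(g x) = ∑ c, #{x ∈ A | c ∈ g x} := by
  simp only [card_filter]
  rw [sum_comm]
  refine sum_congr rfl fun x _ => ?_
  rw [← card_filter, filter_mem_eq_inter, univ_inter]

variable [DecidableEq α]

-- Stated multiplicatively so that it also covers `k < #s`, where both sides vanish.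
lemma card_filter_powersetCard_univ_subset_mul_choose (s : Finset α) (k : ℕ) :
    #{S ∈ powersetCard k (univ : Finset α) | s ⊆ S} * (Fintype.card α).choose #s
      = (Fintype.card α).choose k * k.choose #s := by
  by_cases hsk : #s ≤ k
  · rw [card_filter_powersetCard_subset s univ k (subset_univ s) hsk, card_univ, mul_comm,
      Nat.choose_mul hsk]
  · have hempty : {S ∈ powersetCard k (univ : Finset α) | s ⊆ S} = ∅ := by
      refine filter_eq_empty_iff.mpr fun S hS hsS => hsk ?_
      exact (card_le_card hsS).trans_eq (mem_powersetCard.mp hS).2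
    rw [hempty, Nat.choose_eq_zero_of_lt (not_le.mp hsk)]
    simp

lemma sum_comp_card_pair {R : Type*} [AddCommMonoid R] (a : α) (g : ℕ → R) :
    ∑ b, g #({a, b} : Finset α) = g 1 + (Fintype.card α - 1) • g 2 := by
  rw [← add_sum_erase _ _ (mem_univ a), pair_eq_singleton, card_singleton,
    sum_congr rfl fun b hb => by rw [card_pair (ne_of_mem_erase hb).symm], sum_const,
    card_erase_of_mem (mem_univ a), card_univ]

lemma card_filter_sizedTuples_subset_inf (m : ι → ℕ) (s : Finset α) :
    (#{f ∈ sizedTuples α m | s ⊆ univ.inf f} : ℚ)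
      = #(sizedTuples α m) * ∏ i, ((m i).choose #s / (Fintype.card α).choose #s : ℚ) := by
  have hchoose : ((Fintype.card α).choose #s : ℚ) ≠ 0 :=
    Nat.cast_ne_zero.mpr (Nat.choose_pos (card_le_univ s)).ne'
  simp only [Finset.le_inf_iff, mem_univ, forall_const]
  rw [sizedTuples, filter_piFinset_forall, Fintype.card_piFinset, ← sizedTuples,
    card_sizedTuples, Nat.cast_prod, Nat.cast_prod, ← prod_mul_distrib]
  refine prod_congr rfl fun i _ => ?_
  rw [eq_comm, mul_div_assoc', div_eq_iff hchoose]
  exact_mod_cast (card_filter_powersetCard_univ_subset_mul_choose s (m i)).symm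

lemma sum_card_inf_sizedTuples (m : ι → ℕ) :
    ∑ f ∈ sizedTuples α m, (#(univ.inf f) : ℚ)
      = Fintype.card α * #(sizedTuples α m) * ∏ i, ((m i : ℚ) / Fintype.card α) := by
  rw [← Nat.cast_sum, sum_card_eq_sum_card_filter_mem]
  simp only [← singleton_subset_iff, Nat.cast_sum, card_filter_sizedTuples_subset_inf,
    card_singleton, Nat.choose_one_right, sum_const, card_univ, nsmul_eq_mul]
  ring

lemma sum_card_inf_sq_sizedTuples (m : ι → ℕ) :
    ∑ f ∈ sizedTuples α m, (#(univ.inf f) : ℚ) ^ 2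
      = Fintype.card α * #(sizedTuples α m) * ∏ i, ((m i : ℚ) / Fintype.card α)
        + Fintype.card α * (Fintype.card α - 1) * #(sizedTuples α m)
          * ∏ i, ((m i : ℚ) * (m i - 1) / (Fintype.card α * (Fintype.card α - 1))) := by
  have hpairs : ∑ f ∈ sizedTuples α m, #(univ.inf f) ^ 2
      = ∑ a : α, ∑ b : α, #{f ∈ sizedTuples α m | ({a, b} : Finset α) ⊆ univ.inf f} := by
    calc ∑ f ∈ sizedTuples α m, #(univ.inf f) ^ 2
        = ∑ f ∈ sizedTuples α m, #(univ.inf f ×ˢ univ.inf f) := by simp only [card_product, sq]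
      _ = ∑ p : α × α, #{f ∈ sizedTuples α m | p ∈ univ.inf f ×ˢ univ.inf f} :=
          sum_card_eq_sum_card_filter_mem _ _
      _ = _ := by
          simp only [Fintype.sum_prod_type, mem_product, insert_subset_iff, singleton_subset_iff]
  simp only [← Nat.cast_pow]
  rw [← Nat.cast_sum, hpairs]
  simp only [Nat.cast_sum, card_filter_sizedTuples_subset_inf]
  simp only [sum_comp_card_pair (g := fun j => (#(sizedTuples α m) : ℚ) *
    ∏ i, ((m i).choose j / (Fintype.card α).choose j : ℚ)), sum_const, card_univ, nsmul_eq_mul,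
    Nat.choose_one_right, Nat.cast_choose_two, div_div_div_cancel_right₀ (two_ne_zero' ℚ)]
  rcases (Fintype.card α).eq_zero_or_pos with hα | hα
  · simp [hα]
  · rw [Nat.cast_pred hα]
    ring

theorem variance_card_inf_sizedTuples [Nonempty ι] {m : ι → ℕ} (hn : 2 ≤ Fintype.card α)
    (hm : ∀ i, m i ≤ Fintype.card α) :
    (∑ f ∈ sizedTuples α m, (#(univ.inf f) : ℚ) ^ 2) / #(sizedTuples α m)
        - ((∑ f ∈ sizedTuples α m, (#(univ.inf f) : ℚ)) / #(sizedTuples α m)) ^ 2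
      = (∏ i, (m i : ℚ)) / (Fintype.card α : ℚ) ^ (Fintype.card ι - 1)
        * (1 + (∏ i, ((m i : ℚ) - 1)) / ((Fintype.card α : ℚ) - 1) ^ (Fintype.card ι - 1)
          - (∏ i, (m i : ℚ)) / (Fintype.card α : ℚ) ^ (Fintype.card ι - 1)) := by
  have hA : (#(sizedTuples α m) : ℚ) ≠ 0 := by
    rw [card_sizedTuples]
    exact Nat.cast_ne_zero.mpr (prod_ne_zero_iff.mpr fun i _ => (Nat.choose_pos (hm i)).ne')
  have hn₀ : (Fintype.card α : ℚ) ≠ 0 := by positivity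
  have hn₁ : (Fintype.card α : ℚ) - 1 ≠ 0 := by
    rw [sub_ne_zero, Nat.cast_ne_one]
    omega
  obtain ⟨k, hk⟩ := Nat.exists_eq_add_one_of_ne_zero (Fintype.card_ne_zero (α := ι))
  rw [sum_card_inf_sq_sizedTuples, sum_card_inf_sizedTuples, prod_div_distrib, prod_div_distrib,
    prod_mul_distrib, prod_const, prod_const, card_univ, hk, Nat.add_sub_cancel, mul_pow]
  field_simp
  ring

theorem ghgd_variance_full_overlap_general (n T : ℕ) (hn : 2 ≤ n) (hT : 1 ≤ T)
    (m : Fin T → ℕ) (hm : ∀ i, m i ≤ n) :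
    (∑ f : {f : Fin T → Finset (Fin n) // ∀ i, (f i).card = m i},
        (((Finset.univ.inf fun i => f.1 i).card : ℚ)) ^ 2) /
      (Fintype.card {f : Fin T → Finset (Fin n) // ∀ i, (f i).card = m i}) -
    ((∑ f : {f : Fin T → Finset (Fin n) // ∀ i, (f i).card = m i},
        ((Finset.univ.inf fun i => f.1 i).card : ℚ)) /
      (Fintype.card {f : Fin T → Finset (Fin n) // ∀ i, (f i).card = m i})) ^ 2
      = (∏ i, (m i : ℚ)) / (n : ℚ) ^ (T - 1) *
          (1 + (∏ i, ((m i : ℚ) - 1)) / ((n : ℚ) - 1) ^ (T - 1)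
             - (∏ i, (m i : ℚ)) / (n : ℚ) ^ (T - 1)) := by
  have : Nonempty (Fin T) := ⟨⟨0, hT⟩⟩
  have hsum (g : (Fin T → Finset (Fin n)) → ℚ) :
      ∑ f : {f : Fin T → Finset (Fin n) // ∀ i, (f i).card = m i}, g f.1
        = ∑ f ∈ sizedTuples (Fin n) m, g f :=
    (sum_subtype _ (fun _ => mem_sizedTuples) g).symm
  rw [hsum (fun f => (#(univ.inf f) : ℚ) ^ 2), hsum (fun f => #(univ.inf f)),
    Fintype.card_of_subtype _ fun _ => mem_sizedTuples]
  have h := variance_card_inf_sizedTuples (α := Fin n) (m := m) (by rwa [Fintype.card_fin])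
    (by rwa [Fintype.card_fin])
  rwa [Fintype.card_fin, Fintype.card_fin] at h

/-- Variance of the number of fully overlapped elements:
`Var(x_T) = (∏ mᵢ / n^{T-1}) · (1 + ∏(mᵢ−1)/(n−1)^{T-1} − ∏ mᵢ / n^{T-1})`,
where `Var(x_T) = E(x_T²) − E(x_T)²`. -/
theorem ghgd_variance_full_overlap (n T : ℕ) (hn : 2 ≤ n) (hT : 1 ≤ T)
    (m : Fin T → ℕ) (hm₁ : ∀ i, 1 ≤ m i) (hm : ∀ i, m i ≤ n) :
    (∑ f : {f : Fin T → Finset (Fin n) // ∀ i, (f i).card = m i},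
        (((Finset.univ.inf fun i => f.1 i).card : ℚ)) ^ 2) /
      (Fintype.card {f : Fin T → Finset (Fin n) // ∀ i, (f i).card = m i}) -
    ((∑ f : {f : Fin T → Finset (Fin n) // ∀ i, (f i).card = m i},
        ((Finset.univ.inf fun i => f.1 i).card : ℚ)) /
      (Fintype.card {f : Fin T → Finset (Fin n) // ∀ i, (f i).card = m i})) ^ 2
      = (∏ i, (m i : ℚ)) / (n : ℚ) ^ (T - 1) *
          (1 + (∏ i, ((m i : ℚ) - 1)) / ((n : ℚ) - 1) ^ (T - 1)
             - (∏ i, (m i : ℚ)) / (n : ℚ) ^ (T - 1)) :=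
  ghgd_variance_full_overlap_general n T hn hT m hm
end

section
/- The counts of subset tuples by intersection size satisfy C(x_T = k | n, M) = (n/k) · C(x_T = k−1 | n−1, M−1) for 1 ≤ k ≤ min_i mᵢ, where M−1 denotes (m₁−1, …, m_T−1). -/
/-!
Double counting the pairs `(M, x)` with `M` a tuple counted by `C(x_T = k | n, M)` and
`x ∈ ⋂ᵢ Mᵢ` gives `k · C(x_T = k | n, M)`. On the other hand, for each of the `n` points `x`,
deleting `x` from every `Mᵢ` and relabelling the remaining points by `Fin (n - 1)` through
`x.succAbove` is a bijection from the tuples whose intersection contains `x` onto the tuples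
counted by `C(x_T = k−1 | n−1, M−1)`.
-/

/-- `ghgdCount n m k` is the number of `T`-tuples `(M₁, …, M_T)` of subsets of an
`n`-element set with `|Mᵢ| = mᵢ` and `|⋂ᵢ Mᵢ| = k`. -/
def ghgdCount (n : ℕ) {T : ℕ} (m : Fin T → ℕ) (k : ℕ) : ℕ :=
  Fintype.card {f : Fin T → Finset (Fin n) //
    (∀ i, (f i).card = m i) ∧ (Finset.univ.inf fun i => f i).card = k}

open Finset

namespace Fin

variable {n : ℕ}

noncomputable def succAbovePreimage (x : Fin (n + 1)) (s : Finset (Fin (n + 1))) : Finset (Fin n) :=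
  s.preimage x.succAbove succAbove_right_injective.injOn

def succAboveInsert (x : Fin (n + 1)) (t : Finset (Fin n)) : Finset (Fin (n + 1)) :=
  Finset.cons x (t.map x.succAboveEmb) (by simp)

@[simp]
lemma mem_succAbovePreimage {x : Fin (n + 1)} {s : Finset (Fin (n + 1))} {a : Fin n} :
    a ∈ succAbovePreimage x s ↔ x.succAbove a ∈ s :=
  mem_preimage

@[simp]
lemma self_mem_succAboveInsert (x : Fin (n + 1)) (t : Finset (Fin n)) :
    x ∈ succAboveInsert x t :=
  Finset.mem_cons_self _ _

@[simp]
lemma succAbove_mem_succAboveInsert {x : Fin (n + 1)} {t : Finset (Fin n)} {a : Fin n} :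
    x.succAbove a ∈ succAboveInsert x t ↔ a ∈ t := by
  simp [succAboveInsert, succAbove_ne]

@[simp]
lemma card_succAboveInsert (x : Fin (n + 1)) (t : Finset (Fin n)) :
    #(succAboveInsert x t) = #t + 1 := by
  simp [succAboveInsert]

lemma succAbovePreimage_succAboveInsert (x : Fin (n + 1)) (t : Finset (Fin n)) :
    succAbovePreimage x (succAboveInsert x t) = t := by
  ext a
  simp

lemma succAboveInsert_succAbovePreimage {x : Fin (n + 1)} {s : Finset (Fin (n + 1))}
    (hx : x ∈ s) : succAboveInsert x (succAbovePreimage x s) = s := by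
  ext y
  cases y using x.succAboveCases <;> simp [hx]

lemma inf_succAboveInsert {ι : Type*} (s : Finset ι) (x : Fin (n + 1))
    (g : ι → Finset (Fin n)) :
    s.inf (fun i => succAboveInsert x (g i)) = succAboveInsert x (s.inf g) := by
  ext y
  cases y using x.succAboveCases <;> simp [mem_inf]

lemma succAboveInsert_comp_succAbovePreimage {ι : Type*} [Fintype ι] {x : Fin (n + 1)}
    {f : ι → Finset (Fin (n + 1))} (hx : x ∈ univ.inf f) :
    (fun i => succAboveInsert x (succAbovePreimage x (f i))) = f :=
  funext fun i => succAboveInsert_succAbovePreimage (mem_inf.1 hx i (mem_univ i))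

end Fin

def subsetTuples (n : ℕ) {T : ℕ} (m : Fin T → ℕ) (k : ℕ) : Finset (Fin T → Finset (Fin n)) :=
  {f | (∀ i, #(f i) = m i) ∧ #(univ.inf f) = k}

@[simp]
lemma mem_subsetTuples {n T : ℕ} {m : Fin T → ℕ} {k : ℕ} {f : Fin T → Finset (Fin n)} :
    f ∈ subsetTuples n m k ↔ (∀ i, #(f i) = m i) ∧ #(univ.inf f) = k := by
  simp [subsetTuples]

lemma ghgdCount_eq_card_subsetTuples (n : ℕ) {T : ℕ} (m : Fin T → ℕ) (k : ℕ) :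
    ghgdCount n m k = #(subsetTuples n m k) := by
  rw [ghgdCount, subsetTuples, Fintype.card_subtype]

lemma succAboveInsert_mem_subsetTuples_iff {n T : ℕ} {m : Fin T → ℕ} (hm : ∀ i, m i ≠ 0)
    (k : ℕ) (x : Fin (n + 1)) (g : Fin T → Finset (Fin n)) :
    (fun i => x.succAboveInsert (g i)) ∈ subsetTuples (n + 1) m (k + 1) ↔
      g ∈ subsetTuples n (fun i => m i - 1) k := by
  simp only [mem_subsetTuples, Fin.inf_succAboveInsert, Fin.card_succAboveInsert,
    Nat.add_right_cancel_iff]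
  refine and_congr_left' (forall_congr' fun i => ?_)
  have := hm i
  omega

lemma card_filter_mem_inf_subsetTuples {n T : ℕ} {m : Fin T → ℕ} (hm : ∀ i, m i ≠ 0) (k : ℕ)
    (x : Fin (n + 1)) :
    #{f ∈ subsetTuples (n + 1) m (k + 1) | x ∈ univ.inf f} =
      #(subsetTuples n (fun i => m i - 1) k) := by
  symm
  refine card_nbij' (fun g i => x.succAboveInsert (g i)) (fun f i => x.succAbovePreimage (f i))
    (fun g hg => ?_) (fun f hf => ?_) (fun g _ => ?_) (fun f hf => ?_)
  · rw [mem_coe, mem_filter, succAboveInsert_mem_subsetTuples_iff hm, Fin.inf_succAboveInsert]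
    exact ⟨hg, Fin.self_mem_succAboveInsert x _⟩
  · obtain ⟨hf, hx⟩ := mem_filter.1 hf
    rw [← Fin.succAboveInsert_comp_succAbovePreimage hx,
      succAboveInsert_mem_subsetTuples_iff hm] at hf
    exact hf
  · exact funext fun i => Fin.succAbovePreimage_succAboveInsert x (g i)
  · exact Fin.succAboveInsert_comp_succAbovePreimage (mem_filter.1 hf).2

lemma mul_card_subsetTuples {n T : ℕ} {m : Fin T → ℕ} (hm : ∀ i, m i ≠ 0) (k : ℕ) :
    #(subsetTuples (n + 1) m (k + 1)) * (k + 1) =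
      (n + 1) * #(subsetTuples n (fun i => m i - 1) k) := by
  simpa using card_mul_eq_card_mul (fun f x => x ∈ univ.inf f) (t := univ)
    (fun f hf => by simpa [bipartiteAbove] using (mem_subsetTuples.1 hf).2)
    (fun x _ => card_filter_mem_inf_subsetTuples hm k x)

theorem ghgdCount_shift_general (n T k : ℕ) (hn : 1 ≤ n)
    (m : Fin T → ℕ) (hk : 1 ≤ k) (hkm : ∀ i, k ≤ m i) :
    k * ghgdCount n m k = n * ghgdCount (n - 1) (fun i => m i - 1) (k - 1) := by
  obtain ⟨n, rfl⟩ := Nat.exists_eq_add_of_le' hn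
  obtain ⟨k, rfl⟩ := Nat.exists_eq_add_of_le' hk
  rw [ghgdCount_eq_card_subsetTuples, ghgdCount_eq_card_subsetTuples, Nat.add_sub_cancel,
    Nat.add_sub_cancel, mul_comm, mul_card_subsetTuples (fun i => by have := hkm i; omega)]

/-- `C(x_T = k | n, M) = (n/k) · C(x_T = k−1 | n−1, M−1)` for `1 ≤ k ≤ minᵢ mᵢ`,
stated equivalently as `k · C(x_T = k | n, M) = n · C(x_T = k−1 | n−1, M−1)`. -/
theorem ghgdCount_shift (n T k : ℕ) (hn : 1 ≤ n) (hT : 1 ≤ T)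
    (m : Fin T → ℕ) (hk : 1 ≤ k) (hkm : ∀ i, k ≤ m i) (hm : ∀ i, m i ≤ n) :
    k * ghgdCount n m k = n * ghgdCount (n - 1) (fun i => m i - 1) (k - 1) :=
  ghgdCount_shift_general n T k hn m hk hkm
end

section
/- For the number x_T of fully overlapped elements among T independent uniform random subsets of sizes m₁,…,m_T of an n-set, the moments satisfy the recursion E(x_T^v | n, M) = E(x_T | n, M) · ∑_{i=0}^{v-1} C(v−1, i) · E(x_T^i | n−1, M−1) for v ≥ 1, where M−1 = (m₁−1,…,m_T−1) and E(x_T^0) = 1. -/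
/-- `ghgdMoment n m v` is the `v`-th moment `E(x_T^v)` of the number of fully
overlapped elements among `T` independent uniformly random subsets of sizes
`m i` of an `n`-element set. -/
noncomputable def ghgdMoment (n : ℕ) {T : ℕ} (m : Fin T → ℕ) (v : ℕ) : ℚ :=
  (∑ f : {f : Fin T → Finset (Fin n) // ∀ i, (f i).card = m i},
      ((Finset.univ.inf fun i => f.1 i).card : ℚ) ^ v) /
    (Fintype.card {f : Fin T → Finset (Fin n) // ∀ i, (f i).card = m i})

/-!
Write `S_v = ∑_f |⋂ f|^v` over all families `f` of subsets of the prescribed sizes, so that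
`E(x_T^v) = S_v / S_0`. Splitting one factor of `|⋂ f|^(v+1)` as `∑_{a ∈ ⋂ f} 1` and exchanging
the sums gives `S_{v+1} = ∑_a ∑_{f : a ∈ ⋂ f} |⋂ f|^v`. Families all containing the point `a`
correspond bijectively, by deleting `a`, to families of sizes `m - 1` on the other `n - 1` points,
and this lowers `|⋂ f|` by one. Hence, by the binomial theorem,
`S_{v+1}(n, M) = n ∑_i C(v, i) S_i(n - 1, M - 1)`; the case `v = 0` identifies
`n S_0(n - 1, M - 1) / S_0(n, M)` with `E(x_T)`, and dividing by `S_0(n, M)` gives the recursion.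
-/

open Finset

abbrev SizedFamily (ι α : Type*) (m : ι → ℕ) := {f : ι → Finset α // ∀ i, (f i).card = m i}

section PeelPoint

variable {ι α β : Type*} [DecidableEq α] {a : α} {e : β ↪ α}

lemma card_preimage_add_one (he : Set.range e = {a}ᶜ) {s : Finset α} (ha : a ∈ s) :
    (s.preimage e e.injective.injOn).card + 1 = s.card := by
  classical
  have hfilter : {x ∈ s | x ∈ Set.range e} = s.erase a := by
    ext x; simp [he, and_comm]
  rw [card_preimage, hfilter, card_erase_add_one ha]

lemma insert_map_preimage (he : Set.range e = {a}ᶜ) {s : Finset α} (ha : a ∈ s) :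
    insert a ((s.preimage e e.injective.injOn).map e) = s := by
  ext x
  by_cases hx : x = a
  · simp [hx, ha]
  · obtain ⟨y, rfl⟩ : x ∈ Set.range e := he ▸ hx
    simp [hx]

lemma preimage_insert_map (he : Set.range e = {a}ᶜ) (t : Finset β) :
    (insert a (t.map e)).preimage e e.injective.injOn = t := by
  ext y
  have hya : e y ≠ a := by simpa [he] using Set.mem_range_self (f := e) y
  simp [hya]

lemma card_insert_map (he : Set.range e = {a}ᶜ) (t : Finset β) :
    (insert a (t.map e)).card = t.card + 1 := by
  rw [← card_preimage_add_one he (mem_insert_self a _), preimage_insert_map he]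

variable [Fintype ι] [Fintype α] [Fintype β] [DecidableEq β]

lemma preimage_univ_inf (f : ι → Finset α) :
    (univ.inf f).preimage e e.injective.injOn =
      univ.inf fun i => (f i).preimage e e.injective.injOn := by
  ext y; simp [mem_inf]

lemma sum_mem_inf_eq_sum_sizedFamily {M : Type*} [AddCommMonoid M] [DecidableEq ι]
    (he : Set.range e = {a}ᶜ) {m : ι → ℕ} (hm : ∀ i, 1 ≤ m i) (g : ℕ → M) :
    ∑ f : SizedFamily ι α m with a ∈ univ.inf f.1, g (univ.inf f.1).card =
      ∑ f : SizedFamily ι β (fun i => m i - 1), g ((univ.inf f.1).card + 1) := by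
  have mem_of_filter {f : SizedFamily ι α m} (hf : f ∈ univ.filter fun f => a ∈ univ.inf f.1)
      (i : ι) : a ∈ f.1 i := by
    simp only [mem_filter, mem_univ, true_and, mem_inf] at hf
    exact hf i trivial
  refine sum_bij'
    (fun f hf => ⟨fun i => (f.1 i).preimage e e.injective.injOn, fun i => ?_⟩)
    (fun f _ => ⟨fun i => insert a ((f.1 i).map e), fun i => ?_⟩) ?_ ?_ ?_ ?_ ?_
  · rw [← Nat.add_right_cancel_iff, card_preimage_add_one he (mem_of_filter hf i), f.2 i]
    exact (Nat.sub_add_cancel (hm i)).symm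
  · rw [card_insert_map he, f.2 i]
    exact Nat.sub_add_cancel (hm i)
  · exact fun _ _ => mem_univ _
  · intro f _
    simp [mem_inf]
  · intro f hf
    exact Subtype.ext (funext fun i => insert_map_preimage he (mem_of_filter hf i))
  · intro f _
    exact Subtype.ext (funext fun i => preimage_insert_map he (f.1 i))
  · intro f hf
    rw [← card_preimage_add_one he (mem_filter.1 hf).2, preimage_univ_inf]

end PeelPoint

section MomentSum

variable {ι : Type*} [Fintype ι] [DecidableEq ι]

def momentSum (α : Type*) [Fintype α] [DecidableEq α] (m : ι → ℕ) (v : ℕ) : ℚ :=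
  ∑ f : SizedFamily ι α m, ((univ.inf f.1).card : ℚ) ^ v

variable {α β : Type*} [Fintype α] [DecidableEq α] [Fintype β] [DecidableEq β]

lemma momentSum_zero (m : ι → ℕ) :
    momentSum α m 0 = Fintype.card (SizedFamily ι α m) := by
  simp [momentSum]

lemma momentSum_succ (e : α → β ↪ α) (he : ∀ a, Set.range (e a) = {a}ᶜ) {m : ι → ℕ}
    (hm : ∀ i, 1 ≤ m i) (v : ℕ) :
    momentSum α m (v + 1) = Fintype.card α *
      ∑ i ∈ range (v + 1), (v.choose i : ℚ) * momentSum β (fun i => m i - 1) i := by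
  have card_pow_succ (s : Finset α) :
      (s.card : ℚ) ^ (v + 1) = ∑ a, if a ∈ s then (s.card : ℚ) ^ v else 0 := by
    rw [sum_ite_mem, univ_inter, sum_const, nsmul_eq_mul, pow_succ']
  calc momentSum α m (v + 1)
      = ∑ a, ∑ f : SizedFamily ι α m with a ∈ univ.inf f.1, ((univ.inf f.1).card : ℚ) ^ v := by
        simp only [momentSum, card_pow_succ, sum_filter]
        exact sum_comm
    _ = ∑ _a : α, ∑ f : SizedFamily ι β (fun i => m i - 1),
          (((univ.inf f.1).card + 1 : ℕ) : ℚ) ^ v :=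
        sum_congr rfl fun a _ => sum_mem_inf_eq_sum_sizedFamily (he a) hm (fun k => (k : ℚ) ^ v)
    _ = _ := by
        simp only [sum_const, card_univ, nsmul_eq_mul, momentSum, mul_sum, Nat.cast_add,
          Nat.cast_one, add_pow, one_pow, mul_one]
        rw [sum_comm]
        exact sum_congr rfl fun i _ => sum_congr rfl fun f _ => by ring

end MomentSum

section GhgdMoment

variable {T : ℕ} (n : ℕ) (m : Fin T → ℕ) (v : ℕ)

lemma ghgdMoment_eq_momentSum_div :
    ghgdMoment n m v = momentSum (Fin n) m v / momentSum (Fin n) m 0 := by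
  rw [momentSum_zero]
  unfold ghgdMoment momentSum
  -- not `rfl`: the two sides decide the size constraint by different `Decidable` instances
  congr!

lemma momentSum_eq_momentSum_zero_mul_ghgdMoment :
    momentSum (Fin n) m v = momentSum (Fin n) m 0 * ghgdMoment n m v := by
  rw [ghgdMoment_eq_momentSum_div, momentSum_zero]
  rcases isEmpty_or_nonempty (SizedFamily (Fin T) (Fin n) m) with h | h
  · simp [momentSum]
  · exact (mul_div_cancel₀ _ (by positivity)).symm

end GhgdMoment

theorem ghgdMoment_recursion_general (n T v : ℕ) (hn : 1 ≤ n) (hv : 1 ≤ v)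
    (m : Fin T → ℕ) (hm₁ : ∀ i, 1 ≤ m i) :
    ghgdMoment n m v
      = ghgdMoment n m 1 *
        ∑ i ∈ Finset.range v,
          (Nat.choose (v - 1) i : ℚ) * ghgdMoment (n - 1) (fun j => m j - 1) i := by
  obtain ⟨k, rfl⟩ := Nat.exists_eq_add_of_le' hn
  obtain ⟨w, rfl⟩ := Nat.exists_eq_add_of_le' hv
  have hsucc := momentSum_succ (fun a : Fin (k + 1) => a.succAboveEmb) (by simp) hm₁
  rw [ghgdMoment_eq_momentSum_div _ _ 1, ghgdMoment_eq_momentSum_div _ _ (w + 1), hsucc, hsucc,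
    sum_range_one, Nat.choose_self, Nat.cast_one, one_mul, Nat.add_sub_cancel, Nat.add_sub_cancel]
  simp only [mul_sum, sum_div]
  refine sum_congr rfl fun i _ => ?_
  rw [momentSum_eq_momentSum_zero_mul_ghgdMoment k _ i]
  ring

/-- Moment recursion:
`E(x_T^v | n, M) = E(x_T | n, M) · ∑_{i=0}^{v-1} C(v−1, i) · E(x_T^i | n−1, M−1)`. -/
theorem ghgdMoment_recursion (n T v : ℕ) (hn : 1 ≤ n) (hT : 1 ≤ T) (hv : 1 ≤ v)
    (m : Fin T → ℕ) (hm₁ : ∀ i, 1 ≤ m i) (hm : ∀ i, m i ≤ n) :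
    ghgdMoment n m v
      = ghgdMoment n m 1 *
        ∑ i ∈ Finset.range v,
          (Nat.choose (v - 1) i : ℚ) * ghgdMoment (n - 1) (fun j => m j - 1) i :=
  ghgdMoment_recursion_general n T v hn hv m hm₁
end

section
/- For T independent uniform random subsets of equal size m in an n-set, E(x_T³) = (m^T/n^{T-1}) · (1 + ((m−1)^T/(n−1)^{T-1}) · (3 + (m−2)^T/(n−2)^{T-1})). -/
/-!
Expand `x³ = x^(3) + 3 x^(2) + x^(1)` in falling factorials. Since `x^(k)` is `k!` times the
number of `k`-subsets of the intersection, `E x^(k)` is `n^(k)` times the probability that a fixed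
`k`-set lies in every `Mᵢ`. A fixed `k`-set lies in a fraction `m^(k) / n^(k)` of all `m`-sets,
so by independence `E x^(k) = n^(k) (m^(k) / n^(k))^T`, and the formula is the sum of these
three terms.
-/

open Finset

section SizedFamilies

variable {α ι : Type*} [Fintype α] [Fintype ι] [DecidableEq ι]

theorem sum_prod_subtype_forall_card_eq {R : Type*} [CommSemiring R] (m : ℕ)
    (g : Finset α → R) :
    ∑ f : {f : ι → Finset α // ∀ i, #(f i) = m}, ∏ i, g (f.1 i)
      = (∑ s ∈ univ.powersetCard m, g s) ^ Fintype.card ι := by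
  rw [← card_univ, ← prod_const, prod_univ_sum]
  refine (sum_subtype _ (fun f => ?_) (fun f : ι → Finset α => ∏ i, g (f i))).symm
  simp [Fintype.mem_piFinset]

theorem card_subtype_forall_card_eq (m : ℕ) :
    Fintype.card {f : ι → Finset α // ∀ i, #(f i) = m}
      = (Fintype.card α).choose m ^ Fintype.card ι := by
  have h := sum_prod_subtype_forall_card_eq (ι := ι) m (fun _ : Finset α => 1)
  simp only [prod_const_one, sum_const, card_powersetCard, card_univ, smul_eq_mul, mul_one] at h
  rw [Fintype.card_eq_sum_ones, sum_const, card_univ, smul_eq_mul, mul_one, h]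

variable [DecidableEq α]

theorem card_filter_superset_mul_descFactorial (m : ℕ) {S : Finset α} {k : ℕ} (hS : #S = k) :
    #((univ.powersetCard m).filter (S ⊆ ·)) * (Fintype.card α).descFactorial k
      = (Fintype.card α).choose m * m.descFactorial k := by
  subst hS
  by_cases hS : #S ≤ m
  · rw [card_filter_powersetCard_subset S univ m (subset_univ S) hS, card_univ,
      Nat.descFactorial_eq_factorial_mul_choose, Nat.descFactorial_eq_factorial_mul_choose,
      mul_left_comm ((Fintype.card α).choose m), Nat.choose_mul hS]
    ring
  · have hnone : (univ.powersetCard m).filter (S ⊆ ·) = ∅ :=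
      filter_eq_empty_iff.2 fun s hs hSs => hS (mem_powersetCard_univ.1 hs ▸ card_le_card hSs)
    rw [hnone, Nat.descFactorial_eq_zero_iff_lt.2 (not_le.1 hS), card_empty, zero_mul, mul_zero]

theorem card_filter_superset_inf (S : Finset α) (m : ℕ) :
    #{f : {f : ι → Finset α // ∀ i, #(f i) = m} | S ⊆ univ.inf f.1}
      = #((univ.powersetCard m).filter (S ⊆ ·)) ^ Fintype.card ι := by
  simp only [card_filter, ← sum_prod_subtype_forall_card_eq, prod_boole]
  simp [Finset.le_inf_iff]

theorem descFactorial_card_eq_factorial_mul_card_subsets (t : Finset α) (k : ℕ) :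
    (#t).descFactorial k = k.factorial * #((univ.powersetCard k).filter (· ⊆ t)) := by
  rw [Nat.descFactorial_eq_factorial_mul_choose, ← card_powersetCard]
  congr 2
  ext S
  simp [mem_powersetCard, and_comm]

theorem sum_descFactorial_card_inf_mul (m k : ℕ) :
    (∑ f : {f : ι → Finset α // ∀ i, #(f i) = m}, (#(univ.inf f.1)).descFactorial k)
        * (Fintype.card α).descFactorial k ^ Fintype.card ι
      = (Fintype.card α).descFactorial k
        * ((Fintype.card α).choose m * m.descFactorial k) ^ Fintype.card ι := by
  have double_count : ∑ f : {f : ι → Finset α // ∀ i, #(f i) = m},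
        #((univ.powersetCard k).filter (· ⊆ univ.inf f.1))
      = ∑ S ∈ (univ : Finset α).powersetCard k,
          #((univ.powersetCard m).filter (S ⊆ ·)) ^ Fintype.card ι := by
    rw [sum_congr rfl fun S _ => (card_filter_superset_inf S m).symm]
    simp only [card_filter]
    exact sum_comm
  simp only [descFactorial_card_eq_factorial_mul_card_subsets, ← mul_sum, double_count, mul_assoc,
    sum_mul, ← mul_pow]
  rw [sum_congr rfl fun S hS => by
    rw [card_filter_superset_mul_descFactorial m (mem_powersetCard_univ.1 hS)]]
  rw [sum_const, card_powersetCard, card_univ, smul_eq_mul, ← mul_assoc,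
    ← Nat.descFactorial_eq_factorial_mul_choose]

theorem sum_descFactorial_card_inf_div_card {m k : ℕ} (hm : m ≤ Fintype.card α)
    (hk : k ≤ Fintype.card α) :
    (∑ f : {f : ι → Finset α // ∀ i, #(f i) = m}, ((#(univ.inf f.1)).descFactorial k : ℚ))
        / Fintype.card {f : ι → Finset α // ∀ i, #(f i) = m}
      = (Fintype.card α).descFactorial k
        * ((m.descFactorial k : ℚ) / (Fintype.card α).descFactorial k) ^ Fintype.card ι := by
  have hN : ((Fintype.card α).choose m : ℚ) ≠ 0 := by exact_mod_cast (Nat.choose_pos hm).ne'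
  have hD : ((Fintype.card α).descFactorial k : ℚ) ≠ 0 := by
    exact_mod_cast (Nat.descFactorial_pos.2 hk).ne'
  have h := congrArg (Nat.cast : ℕ → ℚ)
    (sum_descFactorial_card_inf_mul (ι := ι) (α := α) m k)
  push_cast at h
  rw [card_subtype_forall_card_eq, Nat.cast_pow]
  apply mul_right_cancel₀ (pow_ne_zero (Fintype.card ι) hD)
  rw [div_mul_eq_mul_div, h, div_pow]
  field_simp
  ring

end SizedFamilies

theorem Nat.cast_descFactorial_three {R : Type*} [Ring R] (a : ℕ) :
    (a.descFactorial 3 : R) = a * (a - 1) * (a - 2) := by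
  rw [← descPochhammer_eval_eq_descFactorial]
  simp [descPochhammer_succ_eval]

theorem ghgd_third_moment_general (n T m : ℕ) (hn : 3 ≤ n) (hT : 1 ≤ T) (hm : m ≤ n) :
    (∑ f : {f : Fin T → Finset (Fin n) // ∀ i, (f i).card = m},
        ((Finset.univ.inf fun i => f.1 i).card : ℚ) ^ 3) /
      (Fintype.card {f : Fin T → Finset (Fin n) // ∀ i, (f i).card = m})
      = (m : ℚ) ^ T / (n : ℚ) ^ (T - 1) *
          (1 + ((m : ℚ) - 1) ^ T / ((n : ℚ) - 1) ^ (T - 1) *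
            (3 + ((m : ℚ) - 2) ^ T / ((n : ℚ) - 2) ^ (T - 1))) := by
  have moment (k : ℕ) (hk : k ≤ n) :
      (∑ f : {f : Fin T → Finset (Fin n) // ∀ i, (f i).card = m},
          ((Finset.univ.inf fun i => f.1 i).card.descFactorial k : ℚ)) /
        (Fintype.card {f : Fin T → Finset (Fin n) // ∀ i, (f i).card = m})
        = n.descFactorial k * ((m.descFactorial k : ℚ) / n.descFactorial k) ^ T := by
    have h := sum_descFactorial_card_inf_div_card (ι := Fin T) (α := Fin n)
      (hm.trans_eq (Fintype.card_fin n).symm) (hk.trans_eq (Fintype.card_fin n).symm)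
    simp only [Fintype.card_fin] at h
    convert h
  have cube (x : ℕ) : (x : ℚ) ^ 3
      = x.descFactorial 3 + 3 * x.descFactorial 2 + x.descFactorial 1 := by
    rw [Nat.cast_descFactorial_three, Nat.cast_descFactorial_two, Nat.descFactorial_one]
    ring
  simp only [cube, sum_add_distrib, ← mul_sum, add_div, mul_div_assoc]
  rw [moment 3 hn, moment 2 (by omega), moment 1 (by omega)]
  simp only [Nat.cast_descFactorial_three, Nat.cast_descFactorial_two, Nat.descFactorial_one]
  have hn' : (3 : ℚ) ≤ n := by exact_mod_cast hn
  have h0 : (n : ℚ) ≠ 0 := by linarith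
  have h1 : (n : ℚ) - 1 ≠ 0 := by linarith
  have h2 : (n : ℚ) - 2 ≠ 0 := by linarith
  obtain ⟨T, rfl⟩ := Nat.exists_eq_add_of_le' hT
  simp only [div_pow, mul_pow, Nat.add_sub_cancel]
  field_simp
  ring

/-- Third moment of the number of fully overlapped elements for equal subset
sizes: `E(x_T³) = (m^T/n^{T-1}) · (1 + ((m−1)^T/(n−1)^{T-1}) · (3 + (m−2)^T/(n−2)^{T-1}))`. -/
theorem ghgd_third_moment (n T m : ℕ) (hn : 3 ≤ n) (hT : 1 ≤ T)
    (hm₂ : 2 ≤ m) (hm : m ≤ n) :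
    (∑ f : {f : Fin T → Finset (Fin n) // ∀ i, (f i).card = m},
        ((Finset.univ.inf fun i => f.1 i).card : ℚ) ^ 3) /
      (Fintype.card {f : Fin T → Finset (Fin n) // ∀ i, (f i).card = m})
      = (m : ℚ) ^ T / (n : ℚ) ^ (T - 1) *
          (1 + ((m : ℚ) - 1) ^ T / ((n : ℚ) - 1) ^ (T - 1) *
            (3 + ((m : ℚ) - 2) ^ T / ((n : ℚ) - 2) ^ (T - 1))) :=
  ghgd_third_moment_general n T m hn hT hm
end

section
/- For T independent uniform random subsets of sizes m₁,…,m_T of an n-set (n ≥ 2), E(x_T · x_0) = (∏_{i=1}^T mᵢ)(∏_{i=1}^T (n−mᵢ)) / ((n−1)^{T-1} n^{T-1}). -/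
open Finset

lemma card_pi_subtype {ι : Type} [Fintype ι] [DecidableEq ι] {α : Type} [DecidableEq α] [Fintype α]
    (p : ι → α → Prop) [∀ i a, Decidable (p i a)]
    [Fintype {f : ι → α // ∀ i, p i (f i)}] :
    Fintype.card {f : ι → α // ∀ i, p i (f i)} = ∏ i, (univ.filter (p i)).card := by
  rw [Fintype.card_congr (Equiv.subtypePiEquivPi (p := p)), Fintype.card_pi]
  exact Finset.prod_congr rfl fun i _ => Fintype.card_subtype _

lemma card_filter_card_eq (n k : ℕ) :
    (univ.filter fun s : Finset (Fin n) => s.card = k).card = n.choose k := by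
  have : (univ.filter fun s : Finset (Fin n) => s.card = k)
      = (univ : Finset (Fin n)).powersetCard k := by
    rw [Finset.powersetCard_eq_filter, Finset.powerset_univ]
  rw [this, Finset.card_powersetCard, Finset.card_univ, Fintype.card_fin]

lemma count_coord (n k : ℕ) (a b : Fin n) (hab : a ≠ b) :
    (univ.filter fun s : Finset (Fin n) => s.card = k ∧ a ∈ s ∧ b ∉ s).card
      = if k = 0 then 0 else (n - 2).choose (k - 1) := by
  rcases k with _ | k
  · rw [if_pos rfl, Finset.card_eq_zero]
    ext s
    simp only [mem_filter, mem_univ, true_and, Finset.notMem_empty, iff_false]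
    rintro ⟨h0, ha, -⟩
    obtain rfl := Finset.card_eq_zero.mp h0
    simp at ha
  · rw [if_neg (Nat.succ_ne_zero _), Nat.succ_sub_one]
    have hcard : ((univ : Finset (Fin n)) \ {a, b}).card = n - 2 := by
      rw [Finset.card_sdiff_of_subset (Finset.subset_univ _), Finset.card_univ, Fintype.card_fin,
        Finset.card_insert_of_notMem (by simp [hab]), Finset.card_singleton]
    rw [← hcard, ← Finset.card_powersetCard]
    have hi : ∀ s ∈ (univ.filter fun s : Finset (Fin n) => s.card = k + 1 ∧ a ∈ s ∧ b ∉ s),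
        s.erase a ∈ Finset.powersetCard k ((univ : Finset (Fin n)) \ {a, b}) := by
      intro s hs
      simp only [mem_filter, mem_univ, true_and] at hs
      obtain ⟨hc, ha, hb⟩ := hs
      rw [Finset.mem_powersetCard]
      constructor
      · intro x hx
        simp only [Finset.mem_erase] at hx
        simp only [Finset.mem_sdiff, mem_univ, true_and, Finset.mem_insert,
          Finset.mem_singleton]
        push_neg
        exact ⟨hx.1, fun h => hb (h ▸ hx.2)⟩
      · rw [Finset.card_erase_of_mem ha, hc, Nat.add_sub_cancel]
    have hj : ∀ t ∈ Finset.powersetCard k ((univ : Finset (Fin n)) \ {a, b}),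
        insert a t ∈ (univ.filter fun s : Finset (Fin n) => s.card = k + 1 ∧ a ∈ s ∧ b ∉ s) := by
      intro t ht
      rw [Finset.mem_powersetCard] at ht
      obtain ⟨hsub, hc⟩ := ht
      have hat : a ∉ t := fun h => by have := hsub h; simp at this
      have hbt : b ∉ t := fun h => by have := hsub h; simp at this
      simp only [mem_filter, mem_univ, true_and]
      refine ⟨by rw [Finset.card_insert_of_notMem hat, hc], Finset.mem_insert_self _ _, ?_⟩
      simp only [Finset.mem_insert]
      push_neg
      exact ⟨Ne.symm hab, hbt⟩
    refine Finset.card_bij' (fun s _ => s.erase a) (fun t _ => insert a t) hi hj ?_ ?_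
    · intro s hs
      simp only [mem_filter, mem_univ, true_and] at hs
      exact Finset.insert_erase hs.2.1
    · intro t ht
      rw [Finset.mem_powersetCard] at ht
      exact Finset.erase_insert fun h => by have := ht.1 h; simp at this

lemma nat_id (n k : ℕ) (hn : 2 ≤ n) (hk : k ≤ n) :
    n * (n - 1) * (if k = 0 then 0 else (n - 2).choose (k - 1))
      = k * (n - k) * n.choose k := by
  rcases k with _ | k'
  · simp
  · obtain ⟨n', rfl⟩ : ∃ n', n = n' + 2 := ⟨n - 2, by omega⟩
    rw [if_neg (Nat.succ_ne_zero _), Nat.succ_sub_one]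
    have h1 := Nat.add_one_mul_choose_eq n' k'
    have h2 := Nat.choose_mul_succ_eq (n' + 1) (k' + 1)
    have e1 : n' + 2 - 1 = n' + 1 := by omega
    have e2 : n' + 2 - 2 = n' := by omega
    rw [show n' + 2 - 2 = n' from e2, Nat.add_sub_cancel]
    calc (n' + 2) * (n' + 1) * (n').choose k'
        = (n' + 2) * ((n' + 1) * (n').choose k') := by ring
      _ = (n' + 2) * ((n' + 1).choose (k' + 1) * (k' + 1)) := by
          rw [show (n'+1) * (n').choose k' = (n'+1).choose (k'+1) * (k'+1) from h1]
      _ = ((n' + 1).choose (k' + 1) * (n' + 1 + 1)) * (k' + 1) := by ring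
      _ = ((n' + 1 + 1).choose (k' + 1) * (n' + 1 + 1 - (k' + 1))) * (k' + 1) := by rw [h2]
      _ = (k' + 1) * (n' + 2 - (k' + 1)) * (n' + 2).choose (k' + 1) := by
          have : n' + 1 + 1 - (k' + 1) = n' + 2 - (k' + 1) := by omega
          rw [this]; ring



/-- `E(x_T · x_0) = (∏ᵢ mᵢ)(∏ᵢ (n−mᵢ)) / ((n−1)^{T-1} n^{T-1})`, where `x_T`
counts elements in all subsets and `x_0` counts elements in none of them. -/
theorem ghgd_mean_xT_mul_x0 (n T : ℕ) (hn : 2 ≤ n) (hT : 1 ≤ T)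
    (m : Fin T → ℕ) (hm : ∀ i, m i ≤ n) :
    (∑ f : {f : Fin T → Finset (Fin n) // ∀ i, (f i).card = m i},
        ((Finset.univ.inf fun i => f.1 i).card : ℚ) *
          ((Finset.univ.filter fun e : Fin n => ∀ i, e ∉ f.1 i).card : ℚ)) /
      (Fintype.card {f : Fin T → Finset (Fin n) // ∀ i, (f i).card = m i})
      = (∏ i, (m i : ℚ)) * (∏ i, ((n : ℚ) - m i)) /
          (((n : ℚ) - 1) ^ (T - 1) * (n : ℚ) ^ (T - 1)) := by
  classical
  set c : ℕ → ℕ := fun k => if k = 0 then 0 else (n - 2).choose (k - 1) with hc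
  set C : ℚ := ∏ i, (c (m i) : ℚ) with hC
  -- Denominator
  have hD : (Fintype.card {f : Fin T → Finset (Fin n) // ∀ i, (f i).card = m i})
      = ∏ i, n.choose (m i) := by
    refine (card_pi_subtype (fun (i : Fin T) (s : Finset (Fin n)) => s.card = m i)).trans ?_
    exact Finset.prod_congr rfl fun i _ => card_filter_card_eq n (m i)
  -- Step 1: pointwise expansion
  have step1 : ∀ f : {f : Fin T → Finset (Fin n) // ∀ i, (f i).card = m i},
      ((Finset.univ.inf fun i => f.1 i).card : ℚ) *
        ((Finset.univ.filter fun e : Fin n => ∀ i, e ∉ f.1 i).card : ℚ)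
      = ∑ a : Fin n, ∑ b : Fin n,
          if (∀ i, a ∈ f.1 i) ∧ (∀ i, b ∉ f.1 i) then (1 : ℚ) else 0 := by
    intro f
    have h1 : (Finset.univ.inf fun i => f.1 i)
        = Finset.univ.filter fun a : Fin n => ∀ i, a ∈ f.1 i := by
      ext x; simp [Finset.mem_inf]
    rw [h1, ← Finset.sum_boole, ← Finset.sum_boole, Finset.sum_mul_sum]
    refine Finset.sum_congr rfl fun a _ => Finset.sum_congr rfl fun b _ => ?_
    by_cases ha : ∀ i, a ∈ f.1 i <;> by_cases hb : ∀ i, b ∉ f.1 i <;> simp [ha, hb]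
  -- inner count
  have inner : ∀ a b : Fin n,
      (∑ f : {f : Fin T → Finset (Fin n) // ∀ i, (f i).card = m i},
        if (∀ i, a ∈ f.1 i) ∧ (∀ i, b ∉ f.1 i) then (1 : ℚ) else 0)
      = if a = b then 0 else C := by
    intro a b
    by_cases hab : a = b
    · subst hab
      rw [if_pos rfl]
      refine Finset.sum_eq_zero fun f _ => ?_
      rw [if_neg]
      rintro ⟨h1, h2⟩
      exact h2 ⟨0, hT⟩ (h1 ⟨0, hT⟩)
    · rw [if_neg hab, Finset.sum_boole]
      have key : Fintype.card {f : Fin T → Finset (Fin n) //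
          ∀ i, (f i).card = m i ∧ a ∈ f i ∧ b ∉ f i} = ∏ i, c (m i) := by
        refine (card_pi_subtype
            (fun (i : Fin T) (s : Finset (Fin n)) => s.card = m i ∧ a ∈ s ∧ b ∉ s)).trans ?_
        exact Finset.prod_congr rfl fun i _ => count_coord n (m i) a b hab
      have key2 : (Finset.univ.filter fun f : {f : Fin T → Finset (Fin n) //
            ∀ i, (f i).card = m i} => (∀ i, a ∈ f.1 i) ∧ (∀ i, b ∉ f.1 i)).card
          = ∏ i, c (m i) := by
        refine ((Fintype.card_subtype _).symm.trans ?_).trans key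
        refine Fintype.card_congr
          ((Equiv.subtypeSubtypeEquivSubtypeInter
              (fun f : Fin T → Finset (Fin n) => ∀ i, (f i).card = m i)
              (fun f : Fin T → Finset (Fin n) => (∀ i, a ∈ f i) ∧ (∀ i, b ∉ f i))).trans
            (Equiv.subtypeEquivRight ?_))
        intro f
        constructor
        · rintro ⟨h1, h2, h3⟩ i; exact ⟨h1 i, h2 i, h3 i⟩
        · intro h; exact ⟨fun i => (h i).1, fun i => (h i).2.1, fun i => (h i).2.2⟩
      rw [key2, hC]
      push_cast
      rfl
  -- total sum
  have hS : (∑ f : {f : Fin T → Finset (Fin n) // ∀ i, (f i).card = m i},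
        ((Finset.univ.inf fun i => f.1 i).card : ℚ) *
          ((Finset.univ.filter fun e : Fin n => ∀ i, e ∉ f.1 i).card : ℚ))
      = (n : ℚ) * ((n : ℚ) * C - C) := by
    rw [Finset.sum_congr rfl fun f _ => step1 f]
    rw [Finset.sum_comm]
    have swap2 : ∀ a : Fin n, (∑ f : {f : Fin T → Finset (Fin n) // ∀ i, (f i).card = m i},
        ∑ b : Fin n, if (∀ i, a ∈ f.1 i) ∧ (∀ i, b ∉ f.1 i) then (1:ℚ) else 0)
        = ∑ b : Fin n, if a = b then 0 else C := by
      intro a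
      rw [Finset.sum_comm]
      exact Finset.sum_congr rfl fun b _ => inner a b
    rw [Finset.sum_congr rfl fun a _ => swap2 a]
    have hrow : ∀ a : Fin n, (∑ b : Fin n, if a = b then (0:ℚ) else C)
        = (n : ℚ) * C - C := by
      intro a
      have h2 : ∀ b : Fin n, (if a = b then (0:ℚ) else C) = C - (if a = b then C else 0) := by
        intro b; split <;> ring
      rw [Finset.sum_congr rfl fun b _ => h2 b, Finset.sum_sub_distrib,
        Finset.sum_const, Finset.sum_ite_eq, if_pos (Finset.mem_univ a),
        Finset.card_univ, Fintype.card_fin, nsmul_eq_mul]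
    rw [Finset.sum_congr rfl fun a _ => hrow a, Finset.sum_const, Finset.card_univ,
      Fintype.card_fin, nsmul_eq_mul]
  rw [hS, hD]
  -- arithmetic
  have hQid : ∀ i : Fin T, (n : ℚ) * ((n : ℚ) - 1) * (c (m i) : ℚ)
      = (m i : ℚ) * ((n : ℚ) - (m i : ℚ)) * (n.choose (m i) : ℚ) := by
    intro i
    have hid := nat_id n (m i) hn (hm i)
    have h1 : ((n : ℚ) - 1) = ((n - 1 : ℕ) : ℚ) := by
      rw [Nat.cast_sub (le_trans one_le_two hn)]; norm_num
    have h2 : ((n : ℚ) - (m i : ℚ)) = ((n - m i : ℕ) : ℚ) := by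
      rw [Nat.cast_sub (hm i)]
    rw [h1, h2, hc]
    exact_mod_cast congrArg (fun x : ℕ => (x : ℚ)) hid
  have hprod : ((n : ℚ) * ((n : ℚ) - 1)) ^ T * C
      = (∏ i, (m i : ℚ)) * (∏ i, ((n : ℚ) - m i)) * (∏ i, (n.choose (m i) : ℚ)) := by
    rw [hC, ← Fin.prod_const T ((n : ℚ) * ((n : ℚ) - 1)), ← Finset.prod_mul_distrib,
      ← Finset.prod_mul_distrib, ← Finset.prod_mul_distrib]
    exact Finset.prod_congr rfl fun i _ => hQid i
  have hDpos : (0 : ℚ) < ∏ i, (n.choose (m i) : ℚ) := by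
    apply Finset.prod_pos
    intro i _
    exact_mod_cast Nat.choose_pos (hm i)
  have hn0 : (n : ℚ) ≠ 0 := by positivity
  have hn1 : (n : ℚ) - 1 ≠ 0 := by
    have h3 : (1:ℚ) < (n:ℚ) := by exact_mod_cast lt_of_lt_of_le one_lt_two hn
    linarith
  have hDcast : ((∏ i, n.choose (m i) : ℕ) : ℚ) = ∏ i, (n.choose (m i) : ℚ) := by
    push_cast; rfl
  rw [hDcast]
  obtain ⟨T', rfl⟩ : ∃ T', T = T' + 1 :=
    ⟨T - 1, (Nat.succ_pred_eq_of_pos hT).symm⟩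
  rw [pow_succ, mul_pow] at hprod
  simp only [Nat.add_sub_cancel]
  field_simp
  linear_combination hprod
end
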